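/- For f ∈ [0,1] and θ ∈ ℝ, let Λ_{f,θ} be the single-qubit channel given by the Z-rotation followed by depolarizing noise of fidelity f: Λ_{f,θ}(ρ) = f · U ρ U† + (1 − f) · Tr(ρ) · I/2, where U = diag(e^{−iθ/2}, e^{iθ/2}). Then D(Λ_{f,θ}) = max(1, f·|cos θ| + f·|sin θ|), and D(Λ_{f,θ}†) equals the same value. -/

import Mathlib

open Matrix BigOperators Kronecker

noncomputable section

/-- The four single-qubit Pauli matrices `I, X, Y, Z`. -/
def pauli1 : Fin 4 → Matrix (Fin 2) (Fin 2) ℂ :=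
  ![(1 : Matrix (Fin 2) (Fin 2) ℂ),
    !![0, 1; 1, 0],
    !![0, -Complex.I; Complex.I, 0],
    !![1, 0; 0, -1]]

/-- Stabilizer norm of a single-qubit (2×2) matrix: `D(A) = (1/2) Σ_{σ ∈ P_1} |Tr(σ A)|`. -/
def stabNorm1 (A : Matrix (Fin 2) (Fin 2) ℂ) : ℝ :=
  (∑ i : Fin 4, ‖(pauli1 i * A).trace‖) / 2

/-- Channel stabilizer norm of a single-qubit channel: `D(Λ) = max_{σ ∈ P_1} D(Λ(σ))`. -/
def chanNorm1 (Λ : Matrix (Fin 2) (Fin 2) ℂ →ₗ[ℂ] Matrix (Fin 2) (Fin 2) ℂ) : ℝ :=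
  ⨆ i : Fin 4, stabNorm1 (Λ (pauli1 i))

/-- Pauli transfer matrix of a single-qubit channel: `(R_Λ)_{ij} = (1/2) Tr(σ_i Λ(σ_j))`. -/
def ptm1 (Λ : Matrix (Fin 2) (Fin 2) ℂ →ₗ[ℂ] Matrix (Fin 2) (Fin 2) ℂ) :
    Matrix (Fin 4) (Fin 4) ℂ :=
  Matrix.of fun i j => (pauli1 i * Λ (pauli1 j)).trace / 2

/-- The Z-rotation unitary `U = diag(e^{-iθ/2}, e^{iθ/2})`. -/
def rotZ (θ : ℝ) : Matrix (Fin 2) (Fin 2) ℂ :=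
  Matrix.diagonal ![Complex.exp (-((θ : ℂ) / 2) * Complex.I),
                    Complex.exp (((θ : ℂ) / 2) * Complex.I)]

/-!
The Pauli transfer matrix of `Λ_{f,θ}` is `1 ⊕ f R_θ ⊕ f`, with `R_θ` the plane rotation by `θ`.
`D(Λ)` is the largest column sum of `|R_Λ|`, and, since the transfer matrix of `Λ†` is the
transpose of that of `Λ`, `D(Λ†)` is the largest row sum. The matrix `|R_Λ|` is symmetric, and
its column sums are `1`, `f |cos θ| + f |sin θ|` (twice) and `f ≤ 1`.
-/

section PauliTransfer

variable (Λ : Matrix (Fin 2) (Fin 2) ℂ →ₗ[ℂ] Matrix (Fin 2) (Fin 2) ℂ)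

lemma stabNorm1_apply_pauli1 (j : Fin 4) :
    stabNorm1 (Λ (pauli1 j)) = ∑ i, ‖ptm1 Λ i j‖ := by
  simp [stabNorm1, ptm1, Finset.sum_div]

lemma chanNorm1_eq_iSup_sum_norm_ptm1 : chanNorm1 Λ = ⨆ j, ∑ i, ‖ptm1 Λ i j‖ := by
  simp only [chanNorm1, stabNorm1_apply_pauli1]

lemma ptm1_eq_transpose_of_trace_mul_eq {Λd : Matrix (Fin 2) (Fin 2) ℂ →ₗ[ℂ] Matrix (Fin 2) (Fin 2) ℂ}
    (hadj : ∀ A B, (A * Λ B).trace = (Λd A * B).trace) : ptm1 Λd = (ptm1 Λ)ᵀ := by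
  ext i j
  simp only [ptm1, of_apply, transpose_apply, hadj, trace_mul_comm (pauli1 i)]

end PauliTransfer

lemma ciSup_eq_max_of_forall_le {ι : Type*} [Finite ι] {g : ι → ℝ} {a b : ℝ} {i j : ι}
    (hi : g i = a) (hj : g j = b) (hle : ∀ k, g k ≤ max a b) : ⨆ k, g k = max a b := by
  have : Nonempty ι := ⟨i⟩
  refine le_antisymm (ciSup_le hle) (max_le ?_ ?_)
  · exact hi ▸ le_ciSup (Set.finite_range g).bddAbove i
  · exact hj ▸ le_ciSup (Set.finite_range g).bddAbove j

lemma rotZ_mul_mul_conjTranspose (θ : ℝ) (A : Matrix (Fin 2) (Fin 2) ℂ) :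
    rotZ θ * A * (rotZ θ)ᴴ =
      !![A 0 0, (Complex.cos θ - Complex.sin θ * Complex.I) * A 0 1;
         (Complex.cos θ + Complex.sin θ * Complex.I) * A 1 0, A 1 1] := by
  have hneg : Complex.cos θ - Complex.sin θ * Complex.I = Complex.exp (-θ * Complex.I) := by
    rw [Complex.exp_mul_I, Complex.cos_neg, Complex.sin_neg, neg_mul, sub_eq_add_neg]
  rw [hneg, ← Complex.exp_mul_I]
  ext i j
  fin_cases i <;> fin_cases j <;>
    simp only [rotZ, diagonal_conjTranspose, mul_diagonal, diagonal_mul, Pi.star_apply,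
      RCLike.star_def, of_apply, cons_val', cons_val_zero, cons_val_one, cons_val_fin_one,
      Fin.zero_eta, Fin.mk_one, Fin.isValue, ← Complex.exp_conj, map_neg, map_mul, map_div₀,
      Complex.conj_ofReal, Complex.conj_I, map_ofNat] <;>
    rw [mul_right_comm, ← Complex.exp_add] <;> ring_nf
  all_goals rw [Complex.exp_zero, one_mul]

def depolarizedRotZPTM (f θ : ℝ) : Matrix (Fin 4) (Fin 4) ℝ :=
  !![1, 0, 0, 0;
     0, f * Real.cos θ, -(f * Real.sin θ), 0;
     0, f * Real.sin θ, f * Real.cos θ, 0;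
     0, 0, 0, f]

lemma ptm1_depolarized_rotZ {f θ : ℝ}
    {Λ : Matrix (Fin 2) (Fin 2) ℂ →ₗ[ℂ] Matrix (Fin 2) (Fin 2) ℂ}
    (hΛ : ∀ ρ : Matrix (Fin 2) (Fin 2) ℂ,
      Λ ρ = (f : ℂ) • (rotZ θ * ρ * (rotZ θ)ᴴ) +
            ((1 - f : ℝ) : ℂ) • (ρ.trace • ((2 : ℂ)⁻¹ • (1 : Matrix (Fin 2) (Fin 2) ℂ)))) :
    ptm1 Λ = (depolarizedRotZPTM f θ).map (↑) := by
  ext i j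
  fin_cases i <;> fin_cases j <;>
    simp [ptm1, hΛ, rotZ_mul_mul_conjTranspose, pauli1, depolarizedRotZPTM, trace_fin_two,
      mul_apply, Fin.sum_univ_two] <;>
    grind [Complex.I_sq]

lemma abs_depolarizedRotZPTM_comm (f θ : ℝ) (i j : Fin 4) :
    |depolarizedRotZPTM f θ i j| = |depolarizedRotZPTM f θ j i| := by
  fin_cases i <;> fin_cases j <;> simp [depolarizedRotZPTM]

lemma sum_abs_depolarizedRotZPTM {f : ℝ} (hf : 0 ≤ f) (θ : ℝ) (j : Fin 4) :
    ∑ i, |depolarizedRotZPTM f θ i j| =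
      ![1, f * |Real.cos θ| + f * |Real.sin θ|, f * |Real.cos θ| + f * |Real.sin θ|, f] j := by
  fin_cases j <;> simp [depolarizedRotZPTM, Fin.sum_univ_four, abs_mul, abs_of_nonneg hf]
  ring

/-- For the depolarized Z-rotation channel
`Λ_{f,θ}(ρ) = f · U ρ U† + (1 − f) Tr(ρ) I/2` with `U = diag(e^{-iθ/2}, e^{iθ/2})`:
`D(Λ_{f,θ}) = max(1, f|cos θ| + f|sin θ|)`, and the same holds for `D(Λ_{f,θ}†)`. -/
theorem chanNorm_depolarized_rotation (f : ℝ) (hf : f ∈ Set.Icc (0 : ℝ) 1) (θ : ℝ)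
    (Λ Λd : Matrix (Fin 2) (Fin 2) ℂ →ₗ[ℂ] Matrix (Fin 2) (Fin 2) ℂ)
    (hΛ : ∀ ρ : Matrix (Fin 2) (Fin 2) ℂ,
      Λ ρ = (f : ℂ) • (rotZ θ * ρ * (rotZ θ)ᴴ) +
            ((1 - f : ℝ) : ℂ) • (ρ.trace • ((2 : ℂ)⁻¹ • (1 : Matrix (Fin 2) (Fin 2) ℂ))))
    (hadj : ∀ A B : Matrix (Fin 2) (Fin 2) ℂ,
      (A * Λ B).trace = (Λd A * B).trace) :
    chanNorm1 Λ = max 1 (f * |Real.cos θ| + f * |Real.sin θ|) ∧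
    chanNorm1 Λd = max 1 (f * |Real.cos θ| + f * |Real.sin θ|) := by
  obtain ⟨hf0, hf1⟩ := hf
  set R := depolarizedRotZPTM f θ
  have hnorm (i j : Fin 4) : ‖ptm1 Λ i j‖ = |R i j| := by
    simp [ptm1_depolarized_rotZ hΛ, R]
  have hnorm_adj (i j : Fin 4) : ‖ptm1 Λd i j‖ = |R i j| := by
    rw [ptm1_eq_transpose_of_trace_mul_eq Λ hadj, transpose_apply, hnorm,
      abs_depolarizedRotZPTM_comm]
  have hsup : ⨆ j, ∑ i, |R i j| = max 1 (f * |Real.cos θ| + f * |Real.sin θ|) := by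
    simp only [R, sum_abs_depolarizedRotZPTM hf0]
    refine ciSup_eq_max_of_forall_le (i := 0) (j := 1) rfl rfl fun k => ?_
    fin_cases k <;> simp [hf1]
  simp only [chanNorm1_eq_iSup_sum_norm_ptm1, hnorm, hnorm_adj, hsup, and_self]
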